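/- arXiv:1705.01484 — 5 statements merged into one kernel-verified Lean document; each statement's English description precedes it below -/
import Mathlib

section
/- Let p be prime, s a positive integer, k the multiplicative order of p modulo s, l a positive integer, and q = p^{kls}. Let r be a positive integer coprime to q - 1 and P(x) ∈ F_{p^{kl}}[x]. Then x^r P(x^{(q-1)/s}) is a permutation polynomial of F_q if and only if P(ω) ≠ 0 for every ω ∈ F_q with ω^s = 1. -/
/-! Put `t = p ^ (k * l)`, so `q = t ^ s`, and `d = (q - 1) / s`. As `t ≡ 1 [MOD s]`, every
`s`-th root of unity `ω` satisfies `ω ^ t = ω`, and `s * (t - 1) ∣ q - 1`, i.e. `t - 1 ∣ d`. The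
coefficients of `P` are fixed by the Frobenius `x ↦ x ^ t`, so `P(ω) ^ t = P(ω ^ t) = P(ω)`, and a
nonzero `P(ω)` satisfies `P(ω) ^ d = 1`. For `x ≠ 0`, `x ^ d` is such an `ω`, hence
`f x = x ^ r * P(x ^ d)` has `(f x) ^ d = (x ^ d) ^ r`: then `f x = f y` forces `x ^ d = y ^ d`,
next `x ^ r = y ^ r`, and `x = y` because `r` is coprime to `q - 1`. Conversely, since `F_q^×` is
cyclic every `s`-th root of unity is some `x ^ d` with `x ≠ 0`, and a root `ω = x ^ d` of `P`
gives `f x = 0 = f 0`. -/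

open Polynomial

theorem Nat.mul_sub_one_dvd_pow_sub_one {s t : ℕ} (h : s ∣ t - 1) : s * (t - 1) ∣ t ^ s - 1 := by
  rcases Nat.eq_zero_or_pos t with rfl | ht
  · cases s <;> simp
  have hs : (s : ℤ) ∣ ∑ i ∈ Finset.range s, (t : ℤ) ^ i * 1 ^ (s - 1 - i) :=
    dvd_geom_sum₂_self (by simpa [Nat.cast_sub ht] using Int.natCast_dvd_natCast.mpr h)
  have := mul_dvd_mul_right hs ((t : ℤ) - 1)
  rw [geom_sum₂_mul, one_pow] at this
  rw [← Int.natCast_dvd_natCast]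
  push_cast [ht, Nat.one_le_pow _ _ ht]
  exact this

theorem Polynomial.eval_pow_expChar_pow {R : Type*} [CommSemiring R] {p n : ℕ} [ExpChar R p]
    {P : R[X]} (hP : ∀ c ∈ P.coeffs, c ^ p ^ n = c) (x : R) :
    P.eval (x ^ p ^ n) = P.eval x ^ p ^ n := by
  have hmap : P.map (iterateFrobenius R p n) = P := by
    ext i
    rw [coeff_map, iterateFrobenius_def]
    by_cases hi : P.coeff i = 0
    · rw [hi, zero_pow (expChar_pow_pos R p n).ne']
    · exact hP _ (coeff_mem_coeffs hi)
  simpa [hmap, iterateFrobenius_def] using P.eval_map_apply (iterateFrobenius R p n) x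

theorem IsCyclic.range_powMonoidHom_eq_ker {G : Type*} [CommGroup G] [IsCyclic G] [Finite G]
    {d s : ℕ} (h : Nat.card G = d * s) :
    (powMonoidHom d : G →* G).range = (powMonoidHom s).ker := by
  refine Subgroup.eq_of_le_of_card_ge ?_ ?_
  · rintro _ ⟨x, rfl⟩
    simp [← pow_mul, ← h, pow_card_eq_one']
  · have hd : d ≠ 0 := by rintro rfl; exact Nat.card_pos.ne' (h.trans (zero_mul s))
    rw [IsCyclic.card_powMonoidHom_range, IsCyclic.card_powMonoidHom_ker, h,
      Nat.gcd_mul_right_left, Nat.gcd_mul_left_left, Nat.mul_div_cancel_left _ hd.bot_lt]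

theorem Polynomial.eval_pow_sub_one_eq_one_of_pow_eq_one {F : Type*} [Field F] {p n s : ℕ}
    [ExpChar F p] {P : F[X]} (hP : ∀ c ∈ P.coeffs, c ^ p ^ n = c) (hs : s ∣ p ^ n - 1) {ω : F}
    (hω : ω ^ s = 1) (hPω : P.eval ω ≠ 0) : P.eval ω ^ (p ^ n - 1) = 1 := by
  have ht : 1 ≤ p ^ n := Nat.one_le_pow _ _ (expChar_pos F p)
  have hωt : ω ^ p ^ n = ω := by
    obtain ⟨m, hm⟩ := hs
    rw [← Nat.sub_add_cancel ht, pow_succ, hm, pow_mul, hω, one_pow, one_mul]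
  rw [pow_sub₀ _ hPω ht, pow_one, ← eval_pow_expChar_pow hP, hωt, mul_inv_cancel₀ hPω]

namespace FiniteField

variable {F : Type*} [Field F] [Fintype F]

theorem pow_injective_of_coprime {r : ℕ} (hr : r ≠ 0) (hrq : r.Coprime (Fintype.card F - 1)) :
    Function.Injective (fun x : F => x ^ r) := by
  have hunits : (Nat.card Fˣ).Coprime r := by
    rw [Nat.card_units, Nat.card_eq_fintype_card]
    exact hrq.symm
  intro x y hxy
  dsimp only at hxy
  rcases eq_or_ne x 0 with rfl | hx
  · rw [zero_pow hr] at hxy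
    exact ((pow_eq_zero_iff hr).mp hxy.symm).symm
  have hy : y ≠ 0 := by
    rintro rfl
    exact hx ((pow_eq_zero_iff hr).mp (hxy.trans (zero_pow hr)))
  have := hunits.pow_left_bijective.injective (a₁ := Units.mk0 x hx) (a₂ := Units.mk0 y hy)
    (Units.ext (by simpa using hxy))
  simpa using congrArg Units.val this

theorem exists_pow_eq_of_pow_eq_one {d s : ℕ} (hds : d * s = Fintype.card F - 1) {ω : F}
    (hω : ω ^ s = 1) : ∃ x : F, x ≠ 0 ∧ x ^ d = ω := by
  have hω0 : ω ≠ 0 := by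
    rintro rfl
    obtain rfl : s = 0 := zero_pow_eq_one₀.mp hω
    have := Fintype.one_lt_card (α := F)
    omega
  have hmem : Units.mk0 ω hω0 ∈ (powMonoidHom s : Fˣ →* Fˣ).ker := by
    simp [Units.ext_iff, hω]
  rw [← IsCyclic.range_powMonoidHom_eq_ker (d := d)] at hmem
  · obtain ⟨x, hx⟩ := hmem
    exact ⟨x, x.ne_zero, by simpa using congrArg Units.val hx⟩
  · rw [Nat.card_units, Nat.card_eq_fintype_card, hds]

theorem bijective_pow_mul_comp_pow_iff {r d s : ℕ} (hr : r ≠ 0)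
    (hrq : r.Coprime (Fintype.card F - 1)) (hds : d * s = Fintype.card F - 1) {g : F → F}
    (hg : ∀ ω : F, ω ^ s = 1 → g ω ≠ 0 → g ω ^ d = 1) :
    Function.Bijective (fun x => x ^ r * g (x ^ d)) ↔ ∀ ω : F, ω ^ s = 1 → g ω ≠ 0 := by
  constructor
  · intro hbij ω hω hgω
    obtain ⟨x, hx, rfl⟩ := exists_pow_eq_of_pow_eq_one hds hω
    exact hx (hbij.injective (by simp [hgω, zero_pow hr]))
  intro H
  rw [Fintype.bijective_iff_injective_and_card]
  refine ⟨?_, rfl⟩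
  have hpow_inj := pow_injective_of_coprime hr hrq
  have hroot : ∀ x : F, x ≠ 0 → (x ^ d) ^ s = 1 := fun x hx => by
    rw [← pow_mul, hds, FiniteField.pow_card_sub_one_eq_one x hx]
  have hzero : ∀ x : F, x ^ r * g (x ^ d) = 0 ↔ x = 0 := fun x => by
    rcases eq_or_ne x 0 with rfl | hx
    · simp [zero_pow hr]
    · simp [hx, H _ (hroot x hx)]
  have hpow_d : ∀ x : F, x ≠ 0 → (x ^ r * g (x ^ d)) ^ d = (x ^ d) ^ r := fun x hx => by
    rw [mul_pow, hg _ (hroot x hx) (H _ (hroot x hx)), mul_one, ← pow_mul, ← pow_mul, mul_comm]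
  intro x y hxy
  dsimp only at hxy
  rcases eq_or_ne x 0 with rfl | hx
  · exact ((hzero y).mp (hxy.symm.trans ((hzero 0).mpr rfl))).symm
  have hy : y ≠ 0 := fun hy => hx ((hzero x).mp (hxy.trans ((hzero y).mpr hy)))
  have hxd : x ^ d = y ^ d :=
    hpow_inj (show (x ^ d) ^ r = (y ^ d) ^ r by rw [← hpow_d x hx, ← hpow_d y hy, hxy])
  rw [hxd] at hxy
  exact hpow_inj (mul_right_cancel₀ (H _ (hroot y hy)) hxy)

end FiniteField

theorem wan_lidl_chapuy_general (p s k l : ℕ) [Fact p.Prime]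
    (hord : ∀ j : ℕ, 0 < j → (p ^ j ≡ 1 [MOD s] ↔ k ∣ j))
    {F : Type*} [Field F] [Fintype F] [CharP F p]
    (hcard : Fintype.card F = p ^ (k * l * s))
    (r : ℕ) (hr : 0 < r) (hrq : Nat.gcd r (p ^ (k * l * s) - 1) = 1)
    (P : Polynomial F) (hP : ∀ c ∈ P.coeffs, c ^ p ^ (k * l) = c) :
    Function.Bijective
        (fun x : F => x ^ r * P.eval (x ^ ((p ^ (k * l * s) - 1) / s))) ↔
      ∀ ω : F, ω ^ s = 1 → P.eval ω ≠ 0 := by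
  have hkls : k * l * s ≠ 0 := by
    rintro h
    simpa [hcard, h] using Fintype.one_lt_card (α := F)
  have hst : s ∣ p ^ (k * l) - 1 :=
    (Nat.modEq_iff_dvd' (Nat.one_le_pow _ _ (Fact.out : p.Prime).pos)).mp
      ((hord _ (Nat.pos_of_ne_zero (left_ne_zero_of_mul hkls))).mpr (dvd_mul_right k l)).symm
  have hdvd : s * (p ^ (k * l) - 1) ∣ p ^ (k * l * s) - 1 := by
    rw [pow_mul p (k * l) s]
    exact Nat.mul_sub_one_dvd_pow_sub_one hst
  have hds : (p ^ (k * l * s) - 1) / s * s = Fintype.card F - 1 := by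
    rw [hcard, Nat.div_mul_cancel (dvd_of_mul_right_dvd hdvd)]
  rw [← hcard] at hrq
  refine FiniteField.bijective_pow_mul_comp_pow_iff (g := (P.eval ·)) hr.ne' hrq hds
    fun ω hω hPω => ?_
  obtain ⟨m, hm⟩ := Nat.dvd_div_of_mul_dvd hdvd
  rw [hm, pow_mul, P.eval_pow_sub_one_eq_one_of_pow_eq_one hP hst hω hPω, one_pow]

theorem wan_lidl_chapuy (p s k l : ℕ) [Fact p.Prime] (hs : 0 < s) (hl : 0 < l)
    (hk : 0 < k) (hord : ∀ j : ℕ, 0 < j → (p ^ j ≡ 1 [MOD s] ↔ k ∣ j))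
    {F : Type*} [Field F] [Fintype F] [CharP F p]
    (hcard : Fintype.card F = p ^ (k * l * s))
    (r : ℕ) (hr : 0 < r) (hrq : Nat.gcd r (p ^ (k * l * s) - 1) = 1)
    (P : Polynomial F) (hP : ∀ c ∈ P.coeffs, c ^ p ^ (k * l) = c) :
    Function.Bijective
        (fun x : F => x ^ r * P.eval (x ^ ((p ^ (k * l * s) - 1) / s))) ↔
      ∀ ω : F, ω ^ s = 1 → P.eval ω ≠ 0 :=
  wan_lidl_chapuy_general p s k l hord hcard r hr hrq P hP
end

section
/- Let g(x) ∈ F_q[x] be a permutation polynomial and L(x) ∈ F_q[x] a linearized polynomial (an additive F_p-linear map). If g(x) + L(x) is also a permutation polynomial of F_q, then for every δ ∈ F_q the map f(x) = g^{-1}(L(x) + δ) + x is a permutation of F_q, where g^{-1} denotes the compositional inverse of g. -/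
theorem marcos_perm {F : Type*} [Field F] [Fintype F]
    (g ginv L : F → F)
    (hg : Function.Bijective g)
    (hinv₁ : ∀ x, ginv (g x) = x) (hinv₂ : ∀ x, g (ginv x) = x)
    (hL : ∀ x y, L (x + y) = L x + L y)
    (hgL : Function.Bijective (fun x => g x + L x)) :
    ∀ δ : F, Function.Bijective (fun x : F => ginv (L x + δ) + x) := by
  intro δ
  apply Finite.injective_iff_bijective.mp
  intro x y h
  simp only at h
  have h2 : x + ginv (L x + δ) = y + ginv (L y + δ) := by
    rw [add_comm x, add_comm y]; exact h
  have key : g (ginv (L x + δ)) + L (ginv (L x + δ))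
      = g (ginv (L y + δ)) + L (ginv (L y + δ)) := by
    rw [hinv₂, hinv₂, add_right_comm, add_right_comm (L y), ← hL, ← hL, h2]
  have h3 := hgL.injective key
  rw [h3] at h
  exact add_left_cancel h
end

section
/- Let F_q be a finite field of characteristic p, g(x) ∈ F_q[x] a permutation polynomial and L(x) ∈ F_q[x] a linearized polynomial. If g(x) + L(x) is also a permutation polynomial of F_q, then for every δ ∈ F_q the map f(x) = g^{-1}(L(x^p) + δ) + x^p is a permutation of F_q. -/
theorem marcos_perm_frobenius (p : ℕ) [Fact p.Prime]
    {F : Type*} [Field F] [Fintype F] [CharP F p]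
    (g ginv L : F → F)
    (hg : Function.Bijective g)
    (hinv₁ : ∀ x, ginv (g x) = x) (hinv₂ : ∀ x, g (ginv x) = x)
    (hL : ∀ x y, L (x + y) = L x + L y)
    (hgL : Function.Bijective (fun x => g x + L x)) :
    ∀ δ : F, Function.Bijective (fun x : F => ginv (L (x ^ p) + δ) + x ^ p) := by
  intro δ
  have hL0 : L 0 = 0 := by
    have := hL 0 0; simpa using this
  have hLneg : ∀ x, L (-x) = - L x := by
    intro x
    have := hL x (-x)
    simp [hL0] at this
    linear_combination -this
  have hLsub : ∀ x y, L (x - y) = L x - L y := by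
    intro x y
    rw [sub_eq_add_neg, hL, hLneg, sub_eq_add_neg]
  -- h is injective
  have hinj : Function.Injective (fun y : F => ginv (L y + δ) + y) := by
    intro y z hyz
    simp only at hyz
    set u := ginv (L y + δ) with hu
    set v := ginv (L z + δ) with hv
    have hgu : g u = L y + δ := hinv₂ _
    have hgv : g v = L z + δ := hinv₂ _
    have hsub : y - z = v - u := by
      have : u + y = v + z := hyz
      linear_combination this
    have key : g u + L u = g v + L v := by
      have h1 : L (y - z) = L (v - u) := by rw [hsub]
      rw [hLsub, hLsub] at h1
      have h2 : L y - L z = g u - g v := by rw [hgu, hgv]; ring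
      linear_combination h1 - h2
    have huv : u = v := hgL.injective key
    have : y = z := by
      have : u + y = v + z := hyz
      rw [huv] at this
      linear_combination this
    exact this
  have hfrob : Function.Injective (fun x : F => x ^ p) := by
    intro a b hab
    exact frobenius_inj F p hab
  have : Function.Injective (fun x : F => ginv (L (x ^ p) + δ) + x ^ p) := by
    intro a b hab
    exact hfrob (hinj hab)
  exact Finite.injective_iff_bijective.mp this
end

section
/- Let A, S, S̄ be finite sets with |S| = |S̄|, and let f : A → A, h : S → S̄, λ : A → S, λ̄ : A → S̄ be maps satisfying λ̄ ∘ f = h ∘ λ, with λ and λ̄ surjective. Then f is a bijection of A if and only if h is a bijection from S to S̄ and f is injective on λ^{-1}(s) for each s ∈ S. -/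
theorem agw_criterion {A S T : Type*} [Fintype A] [Fintype S] [Fintype T]
    (hcard : Fintype.card S = Fintype.card T)
    (f : A → A) (h : S → T) (lam : A → S) (lamBar : A → T)
    (hcomm : lamBar ∘ f = h ∘ lam)
    (hlam : Function.Surjective lam) (hlamBar : Function.Surjective lamBar) :
    Function.Bijective f ↔
      (Function.Bijective h ∧ ∀ s : S, Set.InjOn f (lam ⁻¹' {s})) := by
  constructor
  · rintro ⟨finj, fsurj⟩
    refine ⟨?_, fun s a _ b _ hab => finj hab⟩
    have hsurj : Function.Surjective h := by
      intro t
      obtain ⟨a, ha⟩ := hlamBar t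
      obtain ⟨a', ha'⟩ := fsurj a
      exact ⟨lam a', by have := congrFun hcomm a'; simp [ha'] at this; exact this ▸ ha⟩
    exact (Fintype.bijective_iff_surjective_and_card h).mpr ⟨hsurj, hcard⟩
  · rintro ⟨⟨hinj, _⟩, hfib⟩
    have finj : Function.Injective f := by
      intro a b hab
      have h1 := congrFun hcomm a
      have h2 := congrFun hcomm b
      simp only [Function.comp_apply] at h1 h2
      have : h (lam a) = h (lam b) := by rw [← h1, ← h2, hab]
      have hls : lam a = lam b := hinj this
      exact hfib (lam a) rfl hls.symm hab
    exact ⟨finj, Finite.injective_iff_surjective.mp finj⟩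
end

section
/- Let g(x) be a permutation polynomial of F_q (characteristic p) and let L_1, L_2 be linearized polynomials over F_q such that L_1 is a permutation of F_q and L_1(x)^p = L_1(x^p) holds (L_1 commutes with Frobenius). If g(x) + L_2(x) is a permutation polynomial, then for every δ ∈ F_q the map x ↦ g^{-1}(L_2(L_1(x)) + δ) + L_1(x) is a permutation of F_q. -/
theorem perm_from_two_linearized (p : ℕ) [Fact p.Prime]
    {F : Type*} [Field F] [Fintype F] [CharP F p]
    (g ginv L₁ L₂ : F → F)
    (hg : Function.Bijective g)
    (hinv₁ : ∀ x, ginv (g x) = x) (hinv₂ : ∀ x, g (ginv x) = x)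
    (hL₁add : ∀ x y, L₁ (x + y) = L₁ x + L₁ y)
    (hL₂add : ∀ x y, L₂ (x + y) = L₂ x + L₂ y)
    (hL₁ : Function.Bijective L₁)
    (hfrob : ∀ x : F, (L₁ x) ^ p = L₁ (x ^ p))
    (hgL₂ : Function.Bijective (fun x => g x + L₂ x)) :
    ∀ δ : F, Function.Bijective (fun x : F => ginv (L₂ (L₁ x) + δ) + L₁ x) := by
  intro δ
  have hL₂0 : L₂ 0 = 0 := by
    have h := hL₂add 0 0
    simp at h
    linear_combination h
  have hL₂sub : ∀ x y : F, L₂ (x - y) = L₂ x - L₂ y := by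
    intro x y
    have h := hL₂add (x - y) y
    simp at h
    linear_combination -h
  have hf : Function.Injective (fun y : F => ginv (L₂ y + δ) + y) := by
    intro a b hab
    simp only at hab
    set A := ginv (L₂ a + δ) with hA
    set B := ginv (L₂ b + δ) with hB
    have hgA : g A = L₂ a + δ := hinv₂ _
    have hgB : g B = L₂ b + δ := hinv₂ _
    have hABdiff : A - B = b - a := by
      have : A + a = B + b := hab
      linear_combination this
    have hkey : g A + L₂ A = g B + L₂ B := by
      have h1 : L₂ A - L₂ B = L₂ b - L₂ a := by
        rw [← hL₂sub, hABdiff, hL₂sub]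
      have h2 : L₂ b - L₂ a = g B - g A := by rw [hgA, hgB]; ring
      linear_combination h1 + h2
    have hAB : A = B := hgL₂.injective hkey
    have : L₂ a + δ = L₂ b + δ := by rw [← hgA, ← hgB, hAB]
    have hab' : A + a = B + b := hab
    rw [hAB] at hab'
    linear_combination hab'
  have hfb : Function.Bijective (fun y : F => ginv (L₂ y + δ) + y) :=
    Finite.injective_iff_bijective.mp hf
  exact hfb.comp hL₁
end
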